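/- For all integers k,n ≥ 1, there exists an involution Φ : SYT(n^k) → SYT(n^k) (i.e. Φ∘Φ is the identity) such that for every T ∈ SYT(n^k), des(T) + des(Φ(T)) = (k−1)(n+1). -/

import Mathlib

open Finset

/-- The set of cells of the Young diagram with row lengths `lam`
(rows and columns are 0-indexed). -/
def ydCells (lam : List ℕ) : Finset (ℕ × ℕ) :=
  (Finset.range lam.length).biUnion
    (fun r => (Finset.range (lam.getD r 0)).image (fun c => (r, c)))

/-- `lam` is a partition: a weakly decreasing list of positive integers. -/
def IsPartition (lam : List ℕ) : Prop :=
  lam.Pairwise (· ≥ ·) ∧ ∀ x ∈ lam, 0 < x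

/-- A standard Young tableau of shape `lam`: a filling of the cells of `lam` with the
numbers `1, …, lam.sum`, each used exactly once, increasing along rows and columns. -/
structure SYT (lam : List ℕ) where
  entry : ℕ × ℕ → ℕ
  zero_outside : ∀ p, p ∉ ydCells lam → entry p = 0
  bijOn : Set.BijOn entry (ydCells lam : Set (ℕ × ℕ)) (Set.Icc 1 lam.sum)
  row_incr : ∀ r c : ℕ, (r, c + 1) ∈ ydCells lam → entry (r, c) < entry (r, c + 1)
  col_incr : ∀ r c : ℕ, (r + 1, c) ∈ ydCells lam → entry (r, c) < entry (r + 1, c)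

open Classical in
/-- The descent set of a standard Young tableau: those `1 ≤ i ≤ N-1` such that the row of
`i` is strictly above (smaller index than) the row of `i+1`. -/
noncomputable def desSet (lam : List ℕ) (T : SYT lam) : Finset ℕ :=
  (Finset.Icc 1 (lam.sum - 1)).filter (fun i =>
    ∃ p ∈ ydCells lam, ∃ q ∈ ydCells lam,
      T.entry p = i ∧ T.entry q = i + 1 ∧ p.1 < q.1)

open Classical in
/-- The ascent set of a standard Young tableau: those `1 ≤ i ≤ N-1` such that the row of
`i` is strictly below (larger index than) the row of `i+1`. -/
noncomputable def ascSet (lam : List ℕ) (T : SYT lam) : Finset ℕ :=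
  (Finset.Icc 1 (lam.sum - 1)).filter (fun i =>
    ∃ p ∈ ydCells lam, ∃ q ∈ ydCells lam,
      T.entry p = i ∧ T.entry q = i + 1 ∧ q.1 < p.1)

open Classical in
/-- The high descent set: descents `i` such that moreover `i+1` lies strictly to the left
of `i`. -/
noncomputable def hdesSet (lam : List ℕ) (T : SYT lam) : Finset ℕ :=
  (Finset.Icc 1 (lam.sum - 1)).filter (fun i =>
    ∃ p ∈ ydCells lam, ∃ q ∈ ydCells lam,
      T.entry p = i ∧ T.entry q = i + 1 ∧ p.1 < q.1 ∧ q.2 < p.2)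

/-- The number of descents. -/
noncomputable def desNum (lam : List ℕ) (T : SYT lam) : ℕ := (desSet lam T).card

/-- The number of ascents. -/
noncomputable def ascNum (lam : List ℕ) (T : SYT lam) : ℕ := (ascSet lam T).card

/-- The number of high descents. -/
noncomputable def hdesNum (lam : List ℕ) (T : SYT lam) : ℕ := (hdesSet lam T).card

open Classical in
/-- `bounce lam T r s` is the number of `1 ≤ i ≤ N-1` such that `i` lies in (0-indexed)
row `r` and `i+1` lies in (0-indexed) row `s` of `T`. -/
noncomputable def bounce (lam : List ℕ) (T : SYT lam) (r s : ℕ) : ℕ :=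
  ((Finset.Icc 1 (lam.sum - 1)).filter (fun i =>
    ∃ p ∈ ydCells lam, ∃ q ∈ ydCells lam,
      T.entry p = i ∧ T.entry q = i + 1 ∧ p.1 = r ∧ q.1 = s)).card

/-!
A column-strict filling of a shape with entries in `[0, m]` standardizes to a standard tableau
`T`, and the fillings standardizing to `T` correspond to the sequences of length `N` that are
weakly increasing and strictly increasing at the descents of `T`; there are
`(m + N - des T).choose N` of them. Adding the column index turns the column-strict fillings of
the `a × b` rectangle into strict ones, which transposition carries to the `b × a` rectangle, and
transposing a tableau complements its descent set. For `a ≤ b`, comparing the two resulting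
expressions for the number of column-strict fillings of `a × b`, for every `m`, shows that `des`
and `(a - 1)(b + 1) - des` have the same distribution, and matching their fibres gives the
involution. For `a > b` one conjugates the involution of `b × a` by transposition.
-/

section Involution

variable {X : Type*}

theorem exists_involution_of_add_eq (f : X → ℕ) (M : ℕ) (σ : X ≃ X)
    (hσ : ∀ x, f x + f (σ x) = M) :
    ∃ Φ : X → X, (∀ x, Φ (Φ x) = x) ∧ ∀ x, f x + f (Φ x) = M := by
  have hσ' (x : X) : f (σ.symm x) + f x = M := by simpa using hσ (σ.symm x)
  -- `σ` pairs the fibre of `d` with that of `M - d`; use it below the middle, its inverse above.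
  refine ⟨fun x => if 2 * f x < M then σ x else if M < 2 * f x then σ.symm x else x,
    fun x => ?_, fun x => ?_⟩
  · have := hσ x
    have := hσ' x
    by_cases h₁ : 2 * f x < M
    · simp [h₁, show ¬ 2 * f (σ x) < M by omega, show M < 2 * f (σ x) by omega]
    by_cases h₂ : M < 2 * f x
    · simp [h₁, h₂, show 2 * f (σ.symm x) < M by omega]
    · simp [h₁, h₂]
  · have := hσ x
    have := hσ' x
    dsimp only
    split_ifs <;> omega

theorem sum_choose_add_sub_eq [Fintype X] (φ : X → ℕ) (d : ℕ) {N : ℕ} (hN : 0 < N) :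
    ∑ x, (d + N - φ x).choose N =
      ∑ e ∈ range (d + 1), #{x | φ x = e} * (d + N - e).choose N := by
  have hvanish : ∀ x ∈ (univ : Finset X),
      (d + N - φ x).choose N ≠ 0 → φ x ∈ range (d + 1) := fun x _ hx => by
    by_contra h
    exact hx (Nat.choose_eq_zero_of_lt (by simp at h; omega))
  rw [← sum_filter_of_ne hvanish,
    ← sum_fiberwise_of_maps_to (g := φ) fun x hx => (mem_filter.1 hx).2]
  refine sum_congr rfl fun e he => ?_
  rw [sum_congr rfl fun x hx => by rw [(mem_filter.1 hx).2], sum_const, smul_eq_mul,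
    filter_filter]
  congr 2
  ext x
  simp only [mem_filter, mem_univ, true_and, and_iff_right_iff_imp]
  exact fun hx => hx ▸ he

theorem card_filter_eq_of_sum_choose_eq [Fintype X] (f g : X → ℕ) {N : ℕ} (hN : 0 < N)
    (h : ∀ m, ∑ x, (m + N - f x).choose N = ∑ x, (m + N - g x).choose N) (d : ℕ) :
    #{x | f x = d} = #{x | g x = d} := by
  induction d using Nat.strong_induction_on with
  | _ d ih =>
    -- at `m = d` only the values `≤ d` contribute, the value `d` with weight `1`
    have hd := h d
    rw [sum_choose_add_sub_eq f d hN, sum_choose_add_sub_eq g d hN, sum_range_succ,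
      sum_range_succ, sum_congr rfl fun e he => by rw [ih e (mem_range.1 he)]] at hd
    simpa using hd

theorem exists_equiv_add_eq_of_sum_choose_eq [Fintype X] (f : X → ℕ) {M N : ℕ} (hN : 0 < N)
    (hf : ∀ x, f x ≤ M)
    (h : ∀ m, ∑ x, (m + N - f x).choose N = ∑ x, (m + N - (M - f x)).choose N) :
    ∃ σ : X ≃ X, ∀ x, f x + f (σ x) = M := by
  have hcard (d : ℕ) : Fintype.card {x // f x = d} = Fintype.card {x // M - f x = d} := by
    simpa [Fintype.card_subtype] using card_filter_eq_of_sum_choose_eq f (M - f ·) hN h d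
  refine ⟨Equiv.ofFiberEquiv fun d => Fintype.equivOfCardEq (hcard d), fun x => ?_⟩
  have := Equiv.ofFiberEquiv_map (fun d => Fintype.equivOfCardEq (hcard d)) x
  have := hf (Equiv.ofFiberEquiv (fun d => Fintype.equivOfCardEq (hcard d)) x)
  omega

end Involution

section Rank

variable {α β : Type*} [LinearOrder β] {s : Finset α} {key : α → β} {p q : α}

theorem card_filter_key_lt_lt (hp : p ∈ s) (h : key p < key q) :
    #{x ∈ s | key x < key p} < #{x ∈ s | key x < key q} :=
  card_lt_card <| (ssubset_iff_of_subset fun x hx => by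
      simp only [mem_filter] at hx ⊢; exact ⟨hx.1, hx.2.trans h⟩).2
    ⟨p, mem_filter.2 ⟨hp, h⟩, by simp⟩

theorem bijOn_card_filter_key_lt (hkey : Set.InjOn key s) :
    Set.BijOn (fun p => #{x ∈ s | key x < key p} + 1) s (Set.Icc 1 #s) := by
  have hmaps : Set.MapsTo (fun p => #{x ∈ s | key x < key p} + 1) s (Icc 1 #s) := fun p hp => by
    have := card_lt_card ((filter_ssubset (p := fun x => key x < key p)).2 ⟨p, hp, lt_irrefl _⟩)
    simp only [coe_Icc, Set.mem_Icc]
    omega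
  have hinj : Set.InjOn (fun p => #{x ∈ s | key x < key p} + 1) s := fun p hp q hq h => by
    rcases lt_trichotomy (key p) (key q) with hpq | hpq | hpq
    · exact absurd h (by have := card_filter_key_lt_lt hp hpq; simp only; omega)
    · exact hkey hp hq hpq
    · exact absurd h (by have := card_filter_key_lt_lt hq hpq; simp only; omega)
  refine ⟨by simpa using hmaps, hinj, ?_⟩
  simpa using surjOn_of_injOn_of_card_le _ hmaps hinj (by simp)

end Rank

section Rectangle

variable {a b : ℕ}

theorem mem_ydCells_replicate {p : ℕ × ℕ} :
    p ∈ ydCells (List.replicate a b) ↔ p.1 < a ∧ p.2 < b := by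
  obtain ⟨r, c⟩ := p
  simp only [ydCells, mem_biUnion, mem_range, mem_image, List.length_replicate, Prod.mk.injEq]
  constructor
  · rintro ⟨r, hr, c, hc, rfl, rfl⟩
    simp_all [List.getD_eq_getElem?_getD]
  · rintro ⟨hr, hc⟩
    exact ⟨r, hr, c, by simp [List.getD_eq_getElem?_getD, hr, hc], rfl, rfl⟩

theorem card_ydCells_replicate : #(ydCells (List.replicate a b)) = a * b := by
  rw [show ydCells (List.replicate a b) = range a ×ˢ range b by ext; simp [mem_ydCells_replicate],
    card_product, card_range, card_range]

theorem sum_replicate_eq_mul : (List.replicate a b).sum = a * b := by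
  simp

def IsRectMono (a b h v : ℕ) (f : ℕ × ℕ → ℕ) : Prop :=
  (∀ r c, r < a → c + 1 < b → f (r, c) + h ≤ f (r, c + 1)) ∧
    ∀ r c, r + 1 < a → c < b → f (r, c) + v ≤ f (r + 1, c)

theorem IsRectMono.add_le {h v : ℕ} {f : ℕ × ℕ → ℕ} (hf : IsRectMono a b h v f)
    {r c k l : ℕ} (hr : r + l < a) (hc : c + k < b) :
    f (r, c) + (h * k + v * l) ≤ f (r + l, c + k) := by
  have hrow : ∀ k, c + k < b → f (r, c) + h * k ≤ f (r, c + k) := by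
    intro k hk
    induction k with
    | zero => simp
    | succ k ih =>
      have := hf.1 r (c + k) (by omega) (by omega)
      rw [mul_add_one, ← add_assoc, ← add_assoc]
      linarith [ih (by omega)]
  have hcol : ∀ l, r + l < a → f (r, c + k) + v * l ≤ f (r + l, c + k) := by
    intro l hl
    induction l with
    | zero => simp
    | succ l ih =>
      have := hf.2 (r + l) (c + k) (by omega) hc
      rw [mul_add_one, ← add_assoc, ← add_assoc]
      linarith [ih (by omega)]
  linarith [hrow k hc, hcol l hr]

theorem IsRectMono.comp_swap {h v : ℕ} {f : ℕ × ℕ → ℕ} (hf : IsRectMono a b h v f) :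
    IsRectMono b a v h (f ∘ Prod.swap) :=
  ⟨fun r c hr hc => hf.2 c r hc hr, fun r c hr hc => hf.1 c r hc hr⟩

end Rectangle

namespace SYT

variable {lam : List ℕ}

@[ext]
theorem ext {T U : SYT lam} (h : T.entry = U.entry) : T = U := by
  cases T; cases U; simpa using h

instance : Finite (SYT lam) := by
  refine Finite.of_injective (fun (T : SYT lam) (p : ydCells lam) =>
    (⟨T.entry p, Nat.lt_succ_of_le (T.bijOn.mapsTo p.2).2⟩ : Fin (lam.sum + 1))) fun T U h => ?_
  ext p
  by_cases hp : p ∈ ydCells lam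
  · simpa using congrFun h ⟨p, hp⟩
  · rw [T.zero_outside p hp, U.zero_outside p hp]

noncomputable instance : Fintype (SYT lam) := Fintype.ofFinite _

variable (T : SYT lam) {p : ℕ × ℕ} {i : ℕ}

theorem one_le_entry (hp : p ∈ ydCells lam) : 1 ≤ T.entry p := (T.bijOn.mapsTo hp).1

theorem entry_le_sum (hp : p ∈ ydCells lam) : T.entry p ≤ lam.sum := (T.bijOn.mapsTo hp).2

/-- A junk cell unless `1 ≤ i ≤ lam.sum`. -/
noncomputable def cellOf (i : ℕ) : ℕ × ℕ := Function.invFunOn T.entry (ydCells lam) i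

theorem cellOf_mem (h1 : 1 ≤ i) (h2 : i ≤ lam.sum) : T.cellOf i ∈ ydCells lam :=
  T.bijOn.surjOn.mapsTo_invFunOn ⟨h1, h2⟩

theorem entry_cellOf (h1 : 1 ≤ i) (h2 : i ≤ lam.sum) : T.entry (T.cellOf i) = i :=
  T.bijOn.invOn_invFunOn.2 ⟨h1, h2⟩

theorem cellOf_entry (hp : p ∈ ydCells lam) : T.cellOf (T.entry p) = p :=
  T.bijOn.invOn_invFunOn.1 hp

theorem mem_desSet_iff :
    i ∈ desSet lam T ↔ (1 ≤ i ∧ i < lam.sum) ∧ (T.cellOf i).1 < (T.cellOf (i + 1)).1 := by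
  simp only [desSet, mem_filter, mem_Icc]
  constructor
  · rintro ⟨hi, p, hp, q, hq, rfl, hqi, hpq⟩
    refine ⟨⟨hi.1, by have := T.entry_le_sum hq; omega⟩, ?_⟩
    rwa [T.cellOf_entry hp, ← hqi, T.cellOf_entry hq]
  · rintro ⟨hi, hlt⟩
    exact ⟨⟨hi.1, by omega⟩, _, T.cellOf_mem hi.1 (by omega), _, T.cellOf_mem (by omega) hi.2,
      T.entry_cellOf hi.1 (by omega), T.entry_cellOf (by omega) hi.2, hlt⟩

theorem desSet_subset : desSet lam T ⊆ Ico 1 lam.sum := fun i hi => by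
  simp only [mem_Ico]; exact ((T.mem_desSet_iff).1 hi).1

theorem row_cellOf_le_of_disjoint {e e' : ℕ} (he : 1 ≤ e) (hee' : e ≤ e')
    (he' : e' ≤ lam.sum) (hdisj : Disjoint (Ico e e') (desSet lam T)) :
    (T.cellOf e').1 ≤ (T.cellOf e).1 := by
  induction e', hee' using Nat.le_induction with
  | base => rfl
  | succ e' hee' ih =>
    have hnot : e' ∉ desSet lam T := disjoint_left.1 hdisj (mem_Ico.2 ⟨hee', e'.lt_succ_self⟩)
    have := ih (by omega) (hdisj.mono_left (Ico_subset_Ico_right e'.le_succ))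
    rw [T.mem_desSet_iff] at hnot
    omega

theorem cellOf_eq_of_entry_eq (hp : p ∈ ydCells lam) (h : T.entry p = i) : T.cellOf i = p :=
  h ▸ T.cellOf_entry hp

theorem card_filter_entry_lt (hp : p ∈ ydCells lam) :
    #{q ∈ ydCells lam | T.entry q < T.entry p} = T.entry p - 1 := by
  rw [← Nat.card_Ico 1 (T.entry p)]
  refine card_nbij T.entry (fun q hq => ?_) (T.bijOn.injOn.mono fun q hq => (mem_filter.1 hq).1)
    fun i hi => ?_
  · simp only [coe_filter, Set.mem_ofPred_eq, coe_Ico, Set.mem_Ico] at hq ⊢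
    exact ⟨T.one_le_entry hq.1, hq.2⟩
  · simp only [coe_Ico, Set.mem_Ico] at hi
    have h2 : i ≤ lam.sum := by have := T.entry_le_sum hp; omega
    exact ⟨T.cellOf i, by simp [T.cellOf_mem hi.1 h2, T.entry_cellOf hi.1 h2, hi.2],
      T.entry_cellOf hi.1 h2⟩

end SYT

namespace SYT

variable {a b : ℕ} (T : SYT (List.replicate a b)) {i : ℕ}

theorem isRectMono_entry : IsRectMono a b 1 1 T.entry :=
  ⟨fun r c hr hc => T.row_incr r c (mem_ydCells_replicate.2 ⟨hr, hc⟩),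
    fun r c hr hc => T.col_incr r c (mem_ydCells_replicate.2 ⟨hr, hc⟩)⟩

theorem entry_lt_entry {p q : ℕ × ℕ} (hq : q ∈ ydCells (List.replicate a b))
    (h1 : p.1 ≤ q.1) (h2 : p.2 ≤ q.2) (hne : p ≠ q) : T.entry p < T.entry q := by
  obtain ⟨r, c⟩ := p
  obtain ⟨r', c'⟩ := q
  dsimp only at h1 h2
  obtain ⟨l, rfl⟩ := Nat.exists_eq_add_of_le h1
  obtain ⟨k, rfl⟩ := Nat.exists_eq_add_of_le h2
  rw [mem_ydCells_replicate] at hq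
  have := T.isRectMono_entry.add_le (r := r) (c := c) (k := k) (l := l) hq.1 hq.2
  have : k + l ≠ 0 := fun h => hne (by simp_all)
  omega

theorem entry_mem_Icc {p : ℕ × ℕ} (hp : p ∈ ydCells (List.replicate a b)) :
    1 ≤ T.entry p ∧ T.entry p ≤ a * b :=
  ⟨T.one_le_entry hp, by simpa using T.entry_le_sum hp⟩

def transpose : SYT (List.replicate b a) where
  entry := T.entry ∘ Prod.swap
  zero_outside p hp := T.zero_outside _ (by simpa [mem_ydCells_replicate, and_comm] using hp)
  bijOn := by
    have hswap : Set.BijOn Prod.swap (ydCells (List.replicate b a) : Set (ℕ × ℕ))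
        (ydCells (List.replicate a b)) :=
      ⟨fun p hp => by simp_all [mem_ydCells_replicate], Prod.swap_injective.injOn,
        fun p hp => ⟨p.swap, by simp_all [mem_ydCells_replicate], p.swap_swap⟩⟩
    simpa [Nat.mul_comm] using T.bijOn.comp hswap
  row_incr r c h := T.col_incr c r (by simpa [mem_ydCells_replicate, and_comm] using h)
  col_incr r c h := T.row_incr c r (by simpa [mem_ydCells_replicate, and_comm] using h)

@[simp]
theorem transpose_transpose : T.transpose.transpose = T := rfl

def transposeEquiv : SYT (List.replicate a b) ≃ SYT (List.replicate b a) :=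
  ⟨transpose, transpose, transpose_transpose, transpose_transpose⟩

theorem cellOf_transpose (h1 : 1 ≤ i) (h2 : i ≤ a * b) :
    T.transpose.cellOf i = (T.cellOf i).swap := by
  have hmem := T.cellOf_mem h1 (by simpa using h2)
  refine T.transpose.cellOf_eq_of_entry_eq ?_ ?_
  · simpa [mem_ydCells_replicate, and_comm] using hmem
  · simpa [transpose] using T.entry_cellOf h1 (by simpa using h2)

theorem row_lt_row_cellOf_succ_iff (h1 : 1 ≤ i) (h2 : i < a * b) :
    (T.cellOf i).1 < (T.cellOf (i + 1)).1 ↔ ¬ (T.cellOf i).2 < (T.cellOf (i + 1)).2 := by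
  have hp := T.cellOf_mem h1 (by simp; omega)
  have hq := T.cellOf_mem (i := i + 1) (by omega) (by simp; omega)
  have hep := T.entry_cellOf h1 (by simp; omega)
  have heq := T.entry_cellOf (i := i + 1) (by omega) (by simp; omega)
  set p := T.cellOf i
  set q := T.cellOf (i + 1)
  constructor
  · intro hr hc
    -- the cell `(q.1, p.2)` would lie strictly between `p` and `q`
    have hm : (q.1, p.2) ∈ ydCells (List.replicate a b) := by
      simp only [mem_ydCells_replicate] at hp hq ⊢; omega
    have := T.entry_lt_entry (p := p) hm hr.le le_rfl fun h => absurd (congrArg Prod.fst h) hr.ne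
    have := T.entry_lt_entry (p := (q.1, p.2)) hq le_rfl hc.le fun h =>
      absurd (congrArg Prod.snd h) hc.ne
    omega
  · intro hc
    by_contra hr
    have := T.entry_lt_entry hp (not_lt.1 hr) (not_lt.1 hc) (fun h => by rw [h] at heq; omega)
    omega

theorem desSet_transpose :
    desSet (List.replicate b a) T.transpose = Ico 1 (a * b) \ desSet (List.replicate a b) T := by
  ext i
  simp only [mem_sdiff, mem_Ico, mem_desSet_iff, sum_replicate_eq_mul, Nat.mul_comm b a]
  by_cases hi : 1 ≤ i ∧ i < a * b
  · rw [T.cellOf_transpose hi.1 hi.2.le, T.cellOf_transpose (by omega) hi.2, Prod.fst_swap,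
      Prod.fst_swap, T.row_lt_row_cellOf_succ_iff hi.1 hi.2]
    tauto
  · tauto

theorem desNum_transpose_add :
    desNum (List.replicate b a) T.transpose + desNum (List.replicate a b) T = a * b - 1 := by
  have hsub := T.desSet_subset
  rw [sum_replicate_eq_mul] at hsub
  have := card_le_card hsub
  rw [Nat.card_Ico] at this
  rw [desNum, desNum, desSet_transpose, card_sdiff_of_subset hsub, Nat.card_Ico]
  omega

theorem desNum_le : desNum (List.replicate a b) T ≤ (a - 1) * b := by
  rw [desNum, ← card_ydCells_replicate]
  refine card_le_card_of_injOn T.cellOf (fun i hi => ?_) (fun i hi j hj hij => ?_)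
  · rw [mem_coe, mem_desSet_iff, sum_replicate_eq_mul] at hi
    have hp := T.cellOf_mem hi.1.1 (by simp; omega)
    have hq := T.cellOf_mem (i := i + 1) (by omega) (by simp; omega)
    simp only [mem_coe, mem_ydCells_replicate] at hp hq ⊢
    omega
  · rw [mem_coe, mem_desSet_iff] at hi hj
    rw [← T.entry_cellOf hi.1.1 hi.1.2.le, ← T.entry_cellOf hj.1.1 hj.1.2.le, hij]

end SYT

section CompatibleSeqs

variable {N m : ℕ} {S : Finset ℕ} {g : ℕ → ℕ} {i j : ℕ}

def IsCompatible (N : ℕ) (S : Finset ℕ) (g : ℕ → ℕ) : Prop :=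
  ∀ i, 1 ≤ i → i < N → g i + (if i ∈ S then 1 else 0) ≤ g (i + 1)

theorem IsCompatible.add_card_le (hg : IsCompatible N S g) (hi : 1 ≤ i) (hij : i ≤ j)
    (hj : j ≤ N) : g i + #{k ∈ Ico i j | k ∈ S} ≤ g j := by
  induction j, hij using Nat.le_induction with
  | base => simp
  | succ j hij ih =>
    have := hg j (by omega) (by omega)
    rw [card_filter, sum_Ico_succ_top hij, ← card_filter]
    linarith [ih (by omega)]

theorem IsCompatible.mono (hg : IsCompatible N S g) (hi : 1 ≤ i) (hij : i ≤ j) (hj : j ≤ N) :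
    g i ≤ g j :=
  (Nat.le_add_right _ _).trans (hg.add_card_le hi hij hj)

theorem IsCompatible.lt_of_mem (hg : IsCompatible N S g) {k : ℕ} (hk : k ∈ S) (hi : 1 ≤ i)
    (hik : i ≤ k) (hkj : k < j) (hj : j ≤ N) : g i < g j := by
  have := hg.add_card_le hi (hik.trans hkj.le) hj
  have : 0 < #{k ∈ Ico i j | k ∈ S} := card_pos.2 ⟨k, by simp [hk, hik, hkj]⟩
  omega

theorem IsCompatible.add_sub_le (hg : IsCompatible N (Ico 1 N) g) (hi : 1 ≤ i) (hij : i ≤ j)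
    (hj : j ≤ N) : g i + (j - i) ≤ g j := by
  have := hg.add_card_le hi hij hj
  rwa [filter_true_of_mem fun k hk => by simp at hk ⊢; omega, Nat.card_Ico] at this

def compatibleSeqs (N m : ℕ) (S : Finset ℕ) : Set (ℕ → ℕ) :=
  {g | (∀ i, ¬ (1 ≤ i ∧ i ≤ N) → g i = 0) ∧ (∀ i, g i ≤ m) ∧ IsCompatible N S g}

def weakCount (S : Finset ℕ) (i : ℕ) : ℕ := #{k ∈ Ico 1 i | k ∉ S}

@[simp]
theorem weakCount_one : weakCount S 1 = 0 := by
  simp [weakCount]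

theorem weakCount_succ (hi : 1 ≤ i) :
    weakCount S (i + 1) = weakCount S i + if i ∈ S then 0 else 1 := by
  rw [weakCount, weakCount, card_filter, sum_Ico_succ_top hi, ← card_filter]
  split_ifs <;> simp_all

theorem weakCount_le_add (hi : 1 ≤ i) (hij : i ≤ j) :
    weakCount S j ≤ weakCount S i + (j - i) := by
  induction j, hij using Nat.le_induction with
  | base => simp
  | succ j hij ih =>
    rw [weakCount_succ (hi.trans hij)]
    split_ifs <;> omega

theorem weakCount_mono (hij : i ≤ j) : weakCount S i ≤ weakCount S j :=
  card_le_card (filter_subset_filter _ (Ico_subset_Ico_right hij))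

theorem IsCompatible.weakCount_le (hg : IsCompatible N (Ico 1 N) g) (hi : 1 ≤ i) (hiN : i ≤ N) :
    weakCount S i ≤ g i := by
  have := hg.add_sub_le le_rfl hi hiN
  have := weakCount_le_add (S := S) le_rfl hi
  rw [weakCount_one] at this
  omega

theorem add_weakCount_mem_compatibleSeqs (hg : g ∈ compatibleSeqs N m S) :
    (fun i => if 1 ≤ i ∧ i ≤ N then g i + weakCount S i else 0) ∈
      compatibleSeqs N (m + weakCount S N) (Ico 1 N) := by
  obtain ⟨-, hle, hg⟩ := hg
  refine ⟨fun i hi => if_neg hi, fun i => ?_, fun i h1 h2 => ?_⟩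
  · dsimp only
    split_ifs with hi
    · linarith [hle i, weakCount_mono (S := S) hi.2]
    · exact Nat.zero_le _
  · have := hg i h1 h2
    dsimp only
    rw [if_pos (show 1 ≤ i ∧ i ≤ N from ⟨h1, h2.le⟩),
      if_pos (show 1 ≤ i + 1 ∧ i + 1 ≤ N by omega), weakCount_succ h1]
    split_ifs at this ⊢ <;> omega

theorem sub_weakCount_mem_compatibleSeqs
    (hg : g ∈ compatibleSeqs N (m + weakCount S N) (Ico 1 N)) :
    (fun i => g i - weakCount S i) ∈ compatibleSeqs N m S := by
  obtain ⟨hsupp, hle, hg⟩ := hg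
  refine ⟨fun i hi => by simp [hsupp i hi], fun i => ?_, fun i h1 h2 => ?_⟩
  · dsimp only
    by_cases hi : 1 ≤ i ∧ i ≤ N
    · have := hg.add_sub_le hi.1 hi.2 le_rfl
      have := hle N
      have := weakCount_le_add (S := S) hi.1 hi.2
      omega
    · simp [hsupp i hi]
  · have := hg i h1 h2
    have := hg.weakCount_le (S := S) h1 h2.le
    rw [if_pos (mem_Ico.2 ⟨h1, h2⟩)] at *
    dsimp only
    rw [weakCount_succ h1]
    split_ifs <;> omega

def compatibleSeqsEquivStrict (N m : ℕ) (S : Finset ℕ) :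
    compatibleSeqs N m S ≃ compatibleSeqs N (m + weakCount S N) (Ico 1 N) where
  toFun g := ⟨_, add_weakCount_mem_compatibleSeqs g.2⟩
  invFun g := ⟨_, sub_weakCount_mem_compatibleSeqs g.2⟩
  left_inv g := by
    ext i
    by_cases hi : 1 ≤ i ∧ i ≤ N
    · simp [hi]
    · simp [hi, g.2.1 i hi]
  right_inv g := by
    ext i
    by_cases hi : 1 ≤ i ∧ i ≤ N
    · have := g.2.2.2.weakCount_le (S := S) hi.1 hi.2
      simp only [hi, and_self, if_true]
      omega
    · simp [hi, g.2.1 i hi]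

def compatibleSeqsEquivOrderEmbedding (N B : ℕ) :
    compatibleSeqs N B (Ico 1 N) ≃ (Fin N ↪o Fin (B + 1)) where
  toFun g := OrderEmbedding.ofStrictMono (fun j => ⟨g.1 (j + 1), Nat.lt_succ_of_le (g.2.2.1 _)⟩)
    fun j k hjk => by
      have := g.2.2.2.add_sub_le (i := j + 1) (j := k + 1) (by omega) (by simp; omega) (by omega)
      simp only [Fin.mk_lt_mk]
      omega
  invFun e := ⟨fun i => if h : 1 ≤ i ∧ i ≤ N then e ⟨i - 1, by omega⟩ else 0, by
    refine ⟨fun i hi => dif_neg hi, fun i => ?_, fun i h1 h2 => ?_⟩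
    · dsimp only
      split_ifs
      · exact Nat.lt_succ_iff.1 (Fin.is_lt _)
      · exact Nat.zero_le _
    · have : e ⟨i - 1, by omega⟩ < e ⟨i, h2⟩ := e.lt_iff_lt.2 (Fin.mk_lt_mk.2 (by omega))
      dsimp only
      rw [dif_pos ⟨h1, h2.le⟩, dif_pos ⟨by omega, h2⟩, if_pos (mem_Ico.2 ⟨h1, h2⟩)]
      simpa using Fin.lt_def.1 this⟩
  left_inv g := by
    ext i
    by_cases hi : 1 ≤ i ∧ i ≤ N
    · have : i - 1 + 1 = i := Nat.sub_add_cancel hi.1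
      simp only [dif_pos hi]
      exact congrArg g.1 this
    · simp [hi, g.2.1 i hi]
  right_inv e := by
    ext j
    simp

theorem card_compatibleSeqs (N m : ℕ) (S : Finset ℕ) :
    Nat.card (compatibleSeqs N m S) = (m + weakCount S N + 1).choose N := by
  rw [Nat.card_congr ((compatibleSeqsEquivStrict N m S).trans
      (compatibleSeqsEquivOrderEmbedding N _)),
    Nat.card_congr Set.powersetCard.ofFinEmbEquiv, Set.powersetCard.card, Nat.card_eq_fintype_card,
    Fintype.card_fin]

instance (N m : ℕ) (S : Finset ℕ) : Finite (compatibleSeqs N m S) :=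
  Finite.of_equiv _ ((compatibleSeqsEquivStrict N m S).trans
    (compatibleSeqsEquivOrderEmbedding N _)).symm

end CompatibleSeqs

section RectFillings

variable {a b : ℕ}

/-- `h = 0, v = 1`: column-strict fillings (semistandard tableaux with entries `0, …, m`);
`h = v = 1`: strict fillings. -/
def rectFillings (a b m h v : ℕ) : Set (ℕ × ℕ → ℕ) :=
  {f | (∀ p : ℕ × ℕ, ¬ (p.1 < a ∧ p.2 < b) → f p = 0) ∧ (∀ p, f p ≤ m) ∧
    IsRectMono a b h v f}

def rectFillingsTranspose (a b m h v : ℕ) :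
    rectFillings a b m h v ≃ rectFillings b a m v h where
  toFun f := ⟨f.1 ∘ Prod.swap, fun p hp => f.2.1 _ (by simpa [and_comm] using hp),
    fun _ => f.2.2.1 _, f.2.2.2.comp_swap⟩
  invFun f := ⟨f.1 ∘ Prod.swap, fun p hp => f.2.1 _ (by simpa [and_comm] using hp),
    fun _ => f.2.2.1 _, f.2.2.2.comp_swap⟩
  left_inv _ := rfl
  right_inv _ := rfl

section Shift

variable {m h v : ℕ} {f : ℕ × ℕ → ℕ} {p : ℕ × ℕ}

theorem col_le_of_mem_rectFillings (hf : f ∈ rectFillings a b m (h + 1) v)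
    (hp : p.1 < a ∧ p.2 < b) : p.2 ≤ f p := by
  obtain ⟨r, c⟩ := p
  have := hf.2.2.add_le (r := r) (c := 0) (k := c) (l := 0) (by simpa using hp.1)
    (by simpa using hp.2)
  have := Nat.le_mul_of_pos_left c (by omega : 0 < h + 1)
  simp only [zero_add, add_zero, mul_zero] at *
  omega

theorem add_sub_col_le_of_mem_rectFillings (hf : f ∈ rectFillings a b m (h + 1) v)
    (hp : p.1 < a ∧ p.2 < b) : f p + (b - 1 - p.2) ≤ m := by
  obtain ⟨r, c⟩ := p
  have := hf.2.2.add_le (r := r) (c := c) (k := b - 1 - c) (l := 0) (by simpa using hp.1)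
    (by simp only at hp; omega)
  have := hf.2.1 (r, c + (b - 1 - c))
  have := Nat.le_mul_of_pos_left (b - 1 - c) (by omega : 0 < h + 1)
  simp only [add_zero, mul_zero] at *
  omega

theorem add_col_mem_rectFillings (hf : f ∈ rectFillings a b m h v) :
    (fun p => if p.1 < a ∧ p.2 < b then f p + p.2 else 0) ∈
      rectFillings a b (m + b - 1) (h + 1) v := by
  obtain ⟨-, hle, hrow, hcol⟩ := hf
  refine ⟨fun p hp => if_neg hp, fun p => ?_, fun r c hr hc => ?_, fun r c hr hc => ?_⟩
  · dsimp only
    split_ifs with hp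
    · have := hle p
      omega
    · exact Nat.zero_le _
  · have := hrow r c hr hc
    simp only [if_pos (show r < a ∧ c < b by omega), if_pos (show r < a ∧ c + 1 < b by omega)]
    omega
  · have := hcol r c hr hc
    simp only [if_pos (show r < a ∧ c < b by omega), if_pos (show r + 1 < a ∧ c < b by omega)]
    omega

theorem sub_col_mem_rectFillings (hf : f ∈ rectFillings a b (m + b - 1) (h + 1) v) :
    (fun p => f p - p.2) ∈ rectFillings a b m h v := by
  refine ⟨fun p hp => by simp [hf.1 p hp], fun p => ?_, fun r c hr hc => ?_,
    fun r c hr hc => ?_⟩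
  · by_cases hp : p.1 < a ∧ p.2 < b
    · have := add_sub_col_le_of_mem_rectFillings hf hp
      dsimp only
      omega
    · simp [hf.1 p hp]
  · have := hf.2.2.1 r c hr hc
    have := col_le_of_mem_rectFillings hf (p := (r, c)) ⟨hr, by omega⟩
    dsimp only at *
    omega
  · have := hf.2.2.2 r c hr hc
    have := col_le_of_mem_rectFillings hf (p := (r, c)) ⟨by omega, hc⟩
    dsimp only at *
    omega

def rectFillingsShift (a b m h v : ℕ) :
    rectFillings a b m h v ≃ rectFillings a b (m + b - 1) (h + 1) v where
  toFun f := ⟨_, add_col_mem_rectFillings f.2⟩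
  invFun f := ⟨_, sub_col_mem_rectFillings f.2⟩
  left_inv f := by
    ext p
    by_cases hp : p.1 < a ∧ p.2 < b
    · simp [hp]
    · simp [hp, f.2.1 p hp]
  right_inv f := by
    ext p
    by_cases hp : p.1 < a ∧ p.2 < b
    · have := col_le_of_mem_rectFillings f.2 hp
      simp only [hp, and_self, if_true]
      omega
    · simp [hp, f.2.1 p hp]

end Shift

/-- Both sides count the strict fillings of the `a × b` rectangle by `0, …, m + b - 1`. -/
theorem card_rectFillings_transpose (hab : a ≤ b) (m : ℕ) :
    Nat.card (rectFillings a b m 0 1) = Nat.card (rectFillings b a (m + b - a) 0 1) := by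
  rw [Nat.card_congr ((rectFillingsShift a b m 0 1).trans (rectFillingsTranspose a b _ _ _)),
    Nat.card_congr (rectFillingsShift b a _ 0 1),
    show m + b - a + a - 1 = m + b - 1 by omega]

end RectFillings

section Standardization

variable {a b m : ℕ}

/-- Standardization numbers the cells by increasing value, equal values from left to right; the
row only breaks ties, which do not occur in column-strict fillings. -/
def stdKey (f : ℕ × ℕ → ℕ) (p : ℕ × ℕ) : ℕ ×ₗ ℕ ×ₗ ℕ :=
  toLex (f p, toLex (p.2, p.1))

theorem stdKey_injective (f : ℕ × ℕ → ℕ) : Function.Injective (stdKey f) := fun p q h => by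
  simp only [stdKey, toLex_inj, Prod.mk.injEq] at h
  exact Prod.ext h.2.2 h.2.1

theorem stdKey_lt_iff {f : ℕ × ℕ → ℕ} {p q : ℕ × ℕ} :
    stdKey f p < stdKey f q ↔
      f p < f q ∨ f p = f q ∧ (p.2 < q.2 ∨ p.2 = q.2 ∧ p.1 < q.1) := by
  simp [stdKey, Prod.Lex.toLex_lt_toLex]

def std (f : rectFillings a b m 0 1) : SYT (List.replicate a b) where
  entry p := if p ∈ ydCells (List.replicate a b) then
    #{q ∈ ydCells (List.replicate a b) | stdKey f q < stdKey f p} + 1 else 0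
  zero_outside p hp := if_neg hp
  bijOn := by
    rw [sum_replicate_eq_mul, ← card_ydCells_replicate]
    exact (bijOn_card_filter_key_lt (stdKey_injective f).injOn).congr fun p hp => (if_pos hp).symm
  row_incr r c h := by
    have hrc : (r, c) ∈ ydCells (List.replicate a b) := by
      rw [mem_ydCells_replicate] at h ⊢; simp only at h ⊢; omega
    simp only [if_pos h, if_pos hrc, add_lt_add_iff_right]
    refine card_filter_key_lt_lt hrc (stdKey_lt_iff.2 ?_)
    rw [mem_ydCells_replicate] at h
    have := f.2.2.2.1 r c h.1 h.2
    simp only [add_zero] at this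
    omega
  col_incr r c h := by
    have hrc : (r, c) ∈ ydCells (List.replicate a b) := by
      rw [mem_ydCells_replicate] at h ⊢; simp only at h ⊢; omega
    simp only [if_pos h, if_pos hrc, add_lt_add_iff_right]
    refine card_filter_key_lt_lt hrc (stdKey_lt_iff.2 (Or.inl ?_))
    rw [mem_ydCells_replicate] at h
    have := f.2.2.2.2 r c h.1 h.2
    omega

variable {f : rectFillings a b m 0 1} {p q : ℕ × ℕ}

theorem std_entry_lt (hp : p ∈ ydCells (List.replicate a b))
    (hq : q ∈ ydCells (List.replicate a b)) (h : stdKey f p < stdKey f q) :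
    (std f).entry p < (std f).entry q := by
  simp only [std, if_pos hp, if_pos hq, add_lt_add_iff_right]
  exact card_filter_key_lt_lt hp h

theorem le_of_std_entry_lt (hp : p ∈ ydCells (List.replicate a b))
    (hq : q ∈ ydCells (List.replicate a b)) (h : (std f).entry p < (std f).entry q) :
    f.1 p ≤ f.1 q := by
  by_contra hlt
  exact (std_entry_lt hq hp (stdKey_lt_iff.2 (Or.inl (not_le.1 hlt)))).not_gt h

theorem lt_of_std_entry_lt (hp : p ∈ ydCells (List.replicate a b))
    (hq : q ∈ ydCells (List.replicate a b)) (h : (std f).entry p < (std f).entry q)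
    (hrow : p.1 < q.1) : f.1 p < f.1 q := by
  refine (le_of_std_entry_lt hp hq h).lt_of_ne fun heq => ?_
  rcases lt_or_ge q.2 p.2 with hcol | hcol
  · exact (std_entry_lt hq hp (stdKey_lt_iff.2 (Or.inr ⟨heq.symm, Or.inl hcol⟩))).not_gt h
  · obtain ⟨r, c⟩ := p
    obtain ⟨r', c'⟩ := q
    dsimp only at hrow hcol heq
    obtain ⟨l, rfl⟩ := Nat.exists_eq_add_of_le hrow.le
    obtain ⟨k, rfl⟩ := Nat.exists_eq_add_of_le hcol
    rw [mem_ydCells_replicate] at hq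
    have := f.2.2.2.add_le (r := r) (c := c) (k := k) (l := l) hq.1 hq.2
    omega

theorem comp_cellOf_mem_compatibleSeqs (f : rectFillings a b m 0 1) :
    (fun i => if 1 ≤ i ∧ i ≤ a * b then f.1 ((std f).cellOf i) else 0) ∈
      compatibleSeqs (a * b) m (desSet (List.replicate a b) (std f)) := by
  have hsum : (List.replicate a b).sum = a * b := sum_replicate_eq_mul
  refine ⟨fun i hi => if_neg hi, fun i => ?_, fun i h1 h2 => ?_⟩
  · dsimp only
    split_ifs
    exacts [f.2.2.1 _, Nat.zero_le _]
  have hp := (std f).cellOf_mem h1 (by omega)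
  have hq := (std f).cellOf_mem (i := i + 1) (by omega) (by omega)
  have hlt : (std f).entry ((std f).cellOf i) < (std f).entry ((std f).cellOf (i + 1)) := by
    rw [(std f).entry_cellOf h1 (by omega), (std f).entry_cellOf (by omega) (by omega)]
    omega
  dsimp only
  rw [if_pos (show 1 ≤ i ∧ i ≤ a * b from ⟨h1, h2.le⟩),
    if_pos (show 1 ≤ i + 1 ∧ i + 1 ≤ a * b from ⟨by omega, h2⟩)]
  split_ifs with hD
  · exact lt_of_std_entry_lt hp hq hlt ((std f).mem_desSet_iff.1 hD).2
  · simpa using le_of_std_entry_lt hp hq hlt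

variable (T : SYT (List.replicate a b)) {g : ℕ → ℕ}

theorem comp_entry_mem_rectFillings
    (hg : g ∈ compatibleSeqs (a * b) m (desSet (List.replicate a b) T)) :
    g ∘ T.entry ∈ rectFillings a b m 0 1 := by
  obtain ⟨hsupp, hle, hcomp⟩ := hg
  refine ⟨fun p hp => ?_, fun p => hle _, fun r c hr hc => ?_, fun r c hr hc => ?_⟩
  · simp [T.zero_outside p (by rwa [mem_ydCells_replicate]), hsupp 0 (by omega)]
  · have hp : (r, c) ∈ ydCells (List.replicate a b) := mem_ydCells_replicate.2 ⟨hr, by omega⟩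
    have hq : (r, c + 1) ∈ ydCells (List.replicate a b) := mem_ydCells_replicate.2 ⟨hr, hc⟩
    simpa using hcomp.mono (T.entry_mem_Icc hp).1 (T.row_incr r c hq).le (T.entry_mem_Icc hq).2
  · have hp : (r, c) ∈ ydCells (List.replicate a b) := mem_ydCells_replicate.2 ⟨by omega, hc⟩
    have hq : (r + 1, c) ∈ ydCells (List.replicate a b) := mem_ydCells_replicate.2 ⟨hr, hc⟩
    -- going down a row forces a descent between the two entries
    obtain ⟨k, hk, hkD⟩ : ∃ k ∈ Ico (T.entry (r, c)) (T.entry (r + 1, c)),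
        k ∈ desSet (List.replicate a b) T := by
      by_contra! hdisj
      have := T.row_cellOf_le_of_disjoint (T.entry_mem_Icc hp).1 (T.col_incr r c hq).le
        (T.entry_le_sum hq) (disjoint_left.2 hdisj)
      rw [T.cellOf_entry hp, T.cellOf_entry hq] at this
      simp at this
    simpa using hcomp.lt_of_mem hkD (T.entry_mem_Icc hp).1 (mem_Ico.1 hk).1 (mem_Ico.1 hk).2
      (T.entry_mem_Icc hq).2

theorem stdKey_lt_of_entry_lt (hg : g ∈ compatibleSeqs (a * b) m (desSet (List.replicate a b) T))
    {p q : ℕ × ℕ} (hp : p ∈ ydCells (List.replicate a b))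
    (hq : q ∈ ydCells (List.replicate a b)) (h : T.entry q < T.entry p) :
    stdKey (g ∘ T.entry) q < stdKey (g ∘ T.entry) p := by
  have hcomp := hg.2.2
  rcases (hcomp.mono (T.entry_mem_Icc hq).1 h.le (T.entry_mem_Icc hp).2).lt_or_eq with hlt | heq
  · exact stdKey_lt_iff.2 (Or.inl hlt)
  -- with no descent in between, `p` is not below `q`, so it lies strictly to its right
  have hdisj : Disjoint (Ico (T.entry q) (T.entry p)) (desSet (List.replicate a b) T) :=
    disjoint_left.2 fun k hk hkD => (hcomp.lt_of_mem hkD (T.entry_mem_Icc hq).1 (mem_Ico.1 hk).1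
      (mem_Ico.1 hk).2 (T.entry_mem_Icc hp).2).ne heq
  have hrow := T.row_cellOf_le_of_disjoint (T.entry_mem_Icc hq).1 h.le (T.entry_le_sum hp) hdisj
  rw [T.cellOf_entry hp, T.cellOf_entry hq] at hrow
  have hcol : q.2 < p.2 := by
    by_contra! hcol
    have := T.entry_lt_entry hq hrow hcol (by rintro rfl; exact lt_irrefl _ h)
    omega
  exact stdKey_lt_iff.2 (Or.inr ⟨heq, Or.inl hcol⟩)

theorem std_comp_entry (hg : g ∈ compatibleSeqs (a * b) m (desSet (List.replicate a b) T)) :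
    std ⟨g ∘ T.entry, comp_entry_mem_rectFillings T hg⟩ = T := by
  ext p
  by_cases hp : p ∈ ydCells (List.replicate a b)
  · have : {q ∈ ydCells (List.replicate a b) |
          stdKey (g ∘ T.entry) q < stdKey (g ∘ T.entry) p} =
        {q ∈ ydCells (List.replicate a b) | T.entry q < T.entry p} := by
      refine filter_congr fun q hq => ⟨fun hkey => ?_, stdKey_lt_of_entry_lt T hg hp hq⟩
      rcases lt_trichotomy (T.entry q) (T.entry p) with h | h | h
      · exact h
      · rw [T.bijOn.injOn hq hp h] at hkey
        exact absurd hkey (lt_irrefl _)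
      · exact absurd (stdKey_lt_of_entry_lt T hg hq hp h) (lt_asymm hkey)
    simp only [std, if_pos hp, this, T.card_filter_entry_lt hp]
    have := T.one_le_entry hp
    omega
  · rw [(std _).zero_outside p hp, T.zero_outside p hp]

noncomputable def stdFiberEquiv :
    {f : rectFillings a b m 0 1 // std f = T} ≃
      compatibleSeqs (a * b) m (desSet (List.replicate a b) T) where
  toFun f := ⟨fun i => if 1 ≤ i ∧ i ≤ a * b then f.1.1 (T.cellOf i) else 0, by
    obtain ⟨f, rfl⟩ := f
    exact comp_cellOf_mem_compatibleSeqs f⟩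
  invFun g := ⟨⟨g.1 ∘ T.entry, comp_entry_mem_rectFillings T g.2⟩, std_comp_entry T g.2⟩
  left_inv f := by
    obtain ⟨f, rfl⟩ := f
    refine Subtype.ext (Subtype.ext (funext fun p => ?_))
    by_cases hp : p ∈ ydCells (List.replicate a b)
    · simp [(std f).entry_mem_Icc hp, (std f).cellOf_entry hp]
    · simp [(std f).zero_outside p hp, f.2.1 p (mem_ydCells_replicate.not.1 hp)]
  right_inv g := by
    ext i
    by_cases hi : 1 ≤ i ∧ i ≤ a * b
    · simp [hi, T.entry_cellOf hi.1 (by simpa using hi.2)]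
    · simp [hi, g.2.1 i hi]

theorem card_rectFillings_eq_sum (hN : 0 < a * b) (m : ℕ) :
    Nat.card (rectFillings a b m 0 1) = ∑ T : SYT (List.replicate a b),
      (m + a * b - desNum (List.replicate a b) T).choose (a * b) := by
  have (T : SYT (List.replicate a b)) : Finite {f : rectFillings a b m 0 1 // std f = T} :=
    Finite.of_equiv _ (stdFiberEquiv T).symm
  rw [← Nat.card_congr (Equiv.sigmaFiberEquiv std), Nat.card_sigma]
  refine sum_congr rfl fun T _ => ?_
  have hsub := T.desSet_subset
  rw [sum_replicate_eq_mul] at hsub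
  have := card_le_card hsub
  rw [Nat.card_congr (stdFiberEquiv T), card_compatibleSeqs, weakCount, ← sdiff_eq_filter,
    card_sdiff_of_subset hsub, desNum]
  rw [Nat.card_Ico] at *
  congr 1
  omega

end Standardization

theorem exists_involution_des_of_le {a b : ℕ} (ha : 1 ≤ a) (hab : a ≤ b) :
    ∃ Φ : SYT (List.replicate a b) → SYT (List.replicate a b), (∀ T, Φ (Φ T) = T) ∧
      ∀ T, desNum (List.replicate a b) T + desNum (List.replicate a b) (Φ T) =
        (a - 1) * (b + 1) := by
  have hN : 0 < a * b := Nat.mul_pos ha (by omega)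
  have hM : (a - 1) * (b + 1) + b + 1 = a * b + a := by
    obtain ⟨a, rfl⟩ := Nat.exists_eq_add_of_le' ha
    simp only [Nat.add_sub_cancel]
    ring
  have hdes (T : SYT (List.replicate a b)) : desNum _ T ≤ (a - 1) * (b + 1) :=
    T.desNum_le.trans (Nat.mul_le_mul_left _ b.le_succ)
  suffices hsum : ∀ m, ∑ T : SYT (List.replicate a b), (m + a * b - desNum _ T).choose (a * b) =
      ∑ T, (m + a * b - ((a - 1) * (b + 1) - desNum _ T)).choose (a * b) by
    obtain ⟨σ, hσ⟩ := exists_equiv_add_eq_of_sum_choose_eq _ hN hdes hsum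
    exact exists_involution_of_add_eq _ _ σ hσ
  intro m
  calc ∑ T : SYT (List.replicate a b), (m + a * b - desNum _ T).choose (a * b)
      = Nat.card (rectFillings a b m 0 1) := (card_rectFillings_eq_sum hN m).symm
    _ = Nat.card (rectFillings b a (m + b - a) 0 1) := card_rectFillings_transpose hab m
    _ = ∑ U : SYT (List.replicate b a), (m + b - a + b * a - desNum _ U).choose (b * a) :=
      card_rectFillings_eq_sum (by rwa [Nat.mul_comm]) _
    _ = ∑ T : SYT (List.replicate a b),
          (m + b - a + b * a - desNum _ T.transpose).choose (b * a) :=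
      (Equiv.sum_comp SYT.transposeEquiv _).symm
    _ = ∑ T, (m + a * b - ((a - 1) * (b + 1) - desNum _ T)).choose (a * b) := by
      refine sum_congr rfl fun T _ => ?_
      have := T.desNum_transpose_add
      have := hdes T
      rw [Nat.mul_comm b a]
      congr 1
      omega

/-- Theorem: there is an involution on `SYT(n^k)` complementing the number of descents
to `(k-1)(n+1)`. -/
theorem exists_involution_des (k n : ℕ) (hk : 1 ≤ k) (hn : 1 ≤ n) :
    ∃ Φ : SYT (List.replicate k n) → SYT (List.replicate k n),
      (∀ T, Φ (Φ T) = T) ∧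
      (∀ T, desNum (List.replicate k n) T + desNum (List.replicate k n) (Φ T) =
        (k - 1) * (n + 1)) := by
  rcases le_total k n with hkn | hnk
  · exact exists_involution_des_of_le hk hkn
  obtain ⟨Ψ, hΨ, hdes⟩ := exists_involution_des_of_le hn hnk
  refine ⟨fun T => (Ψ T.transpose).transpose, fun T => by simp [hΨ], fun T => ?_⟩
  have h₁ := T.desNum_transpose_add
  have h₂ := (Ψ T.transpose).desNum_transpose_add
  have h₃ := hdes T.transpose
  have : (k - 1) * (n + 1) + (n - 1) * (k + 1) + 2 = 2 * (k * n) := by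
    obtain ⟨k, rfl⟩ := Nat.exists_eq_add_of_le' hk
    obtain ⟨n, rfl⟩ := Nat.exists_eq_add_of_le' hn
    simp only [Nat.add_sub_cancel]
    ring
  rw [Nat.mul_comm n k] at h₂
  dsimp only
  omega
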